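/- Let Ω = (0,1) ∪ (2,4) ⊂ ℝ (the union of two open intervals, of total Lebesgue measure 3). Then Ω is not a spectral set: there exists no subset Λ ⊂ ℝ such that { e_λ|_Ω : λ ∈ Λ } is an orthogonal basis of L²(Ω). -/

import Mathlib

open MeasureTheory

/-- The exponential `e_λ(x) = e^{2πiλx}` on `ℝ`. -/
noncomputable def expFn (l : ℝ) : ℝ → ℂ :=
  fun x => Complex.exp (2 * Real.pi * Complex.I * l * x)

open Classical in
/-- The element of `L²(Ω)` determined by a function `f : ℝ → ℂ`
(junk value `0` if `f` is not square-integrable on `Ω`). -/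
noncomputable def toL2 (Ω : Set ℝ) (f : ℝ → ℂ) : Lp ℂ 2 (volume.restrict Ω) :=
  if h : MemLp f 2 (volume.restrict Ω) then h.toLp f else 0

/-- `(Ω, Λ)` is a spectral pair: the restrictions `e_λ|_Ω`, `λ ∈ Λ`, are pairwise
orthogonal nonzero elements of `L²(Ω)` whose linear span is dense in `L²(Ω)`. -/
def IsSpectralPair (Ω : Set ℝ) (Λ : Set ℝ) : Prop :=
  (∀ l ∈ Λ, toL2 Ω (expFn l) ≠ 0) ∧
  (∀ l ∈ Λ, ∀ m ∈ Λ, l ≠ m → (inner ℂ (toL2 Ω (expFn l)) (toL2 Ω (expFn m)) : ℂ) = 0) ∧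
  Dense (↑(Submodule.span ℂ ((fun l => toL2 Ω (expFn l)) '' Λ)) :
    Set (Lp ℂ 2 (volume.restrict Ω)))

section Aux
open Complex Set

noncomputable abbrev Om : Set ℝ := Set.Ioo 0 1 ∪ Set.Ioo 2 4

lemma om_meas : MeasurableSet Om := (measurableSet_Ioo.union measurableSet_Ioo)

lemma contin (c : ℂ) : Continuous fun x : ℝ => Complex.exp (c * x) :=
  Complex.continuous_exp.comp (by continuity)

lemma int_Ioo (c : ℂ) (a b : ℝ) (hab : a ≤ b) :
    ∫ x in Set.Ioo a b, Complex.exp (c * x) = ∫ x in a..b, Complex.exp (c * x) := by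
  rw [intervalIntegral.integral_of_le hab, ← MeasureTheory.integral_Ioc_eq_integral_Ioo]

lemma integrableOn_Ioo (c : ℂ) (a b : ℝ) :
    IntegrableOn (fun x : ℝ => Complex.exp (c * x)) (Set.Ioo a b) :=
  ((contin c).integrableOn_Ioc.mono Set.Ioo_subset_Ioc_self le_rfl)

lemma int_Om (c : ℂ) :
    ∫ x in Om, Complex.exp (c * x)
      = (∫ x in (0:ℝ)..1, Complex.exp (c * x)) + ∫ x in (2:ℝ)..4, Complex.exp (c * x) := by
  rw [MeasureTheory.setIntegral_union (by simp [Set.disjoint_left]; intro x h1 h2; intro h3; linarith)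
    measurableSet_Ioo (integrableOn_Ioo c 0 1) (integrableOn_Ioo c 2 4),
    int_Ioo c 0 1 (by norm_num), int_Ioo c 2 4 (by norm_num)]

lemma circle_alg (w : ℂ) (hw : w * (starRingEnd ℂ) w = 1) (h : w^3 + w^2 + 1 = 0) : False := by
  have hw0 : w ≠ 0 := by rintro rfl; simp at hw
  have hu : (starRingEnd ℂ) w = w⁻¹ := by field_simp; linear_combination hw
  have h2 : (starRingEnd ℂ) (w^3 + w^2 + 1) = 0 := by rw [h]; simp
  rw [map_add, map_add, map_pow, map_pow, map_one, hu] at h2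
  field_simp at h2
  have h3 : w^2 * (1 + w + w^3) = 0 := by linear_combination w^2 * h2
  have h3' : 1 + w + w^3 = 0 := by
    rcases mul_eq_zero.mp h3 with h5 | h5
    · exact absurd (pow_eq_zero_iff (by norm_num) |>.mp h5) hw0
    · exact h5
  have h4 : w * (w - 1) = 0 := by linear_combination h - h3'
  rcases mul_eq_zero.mp h4 with h5 | h5
  · exact hw0 h5
  · have : w = 1 := by linear_combination h5
    rw [this] at h; norm_num at h

lemma zero_set (ν : ℝ)
    (h0 : ∫ x in Om, Complex.exp ((2*Real.pi*Complex.I*ν) * x) = 0) : ∃ n : ℤ, ν = n := by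
  by_cases hν : ν = 0
  · exact ⟨0, by simp [hν]⟩
  set c : ℂ := 2*Real.pi*Complex.I*ν with hcdef
  have hc : c ≠ 0 := by
    simp only [hcdef]
    refine mul_ne_zero (mul_ne_zero (mul_ne_zero two_ne_zero ?_) Complex.I_ne_zero) ?_
    · exact_mod_cast Real.pi_ne_zero
    · exact_mod_cast hν
  rw [int_Om, integral_exp_mul_complex hc, integral_exp_mul_complex hc] at h0
  set w : ℂ := Complex.exp c with hwdef
  have e0 : Complex.exp (c * ((0:ℝ):ℂ)) = 1 := by norm_num
  have e1 : Complex.exp (c * ((1:ℝ):ℂ)) = w := by norm_num [hwdef]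
  have e2 : Complex.exp (c * ((2:ℝ):ℂ)) = w^2 := by
    rw [show (c * ((2:ℝ):ℂ)) = (2:ℕ)*c by push_cast; ring, Complex.exp_nat_mul]
  have e4 : Complex.exp (c * ((4:ℝ):ℂ)) = w^4 := by
    rw [show (c * ((4:ℝ):ℂ)) = (4:ℕ)*c by push_cast; ring, Complex.exp_nat_mul]
  rw [e0, e1, e2, e4] at h0
  have hnum : (w - 1) * (w^3 + w^2 + 1) = 0 := by
    field_simp at h0
    linear_combination h0
  have hw : w * (starRingEnd ℂ) w = 1 := by
    have hconj : (starRingEnd ℂ) c = -c := by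
      simp only [hcdef, map_mul, Complex.conj_I, Complex.conj_ofReal, map_ofNat]; ring
    rw [hwdef, ← Complex.exp_conj, hconj, ← Complex.exp_add, add_neg_cancel, Complex.exp_zero]
  rcases mul_eq_zero.mp hnum with h5 | h5
  · have hw1 : w = 1 := by linear_combination h5
    rw [hwdef, Complex.exp_eq_one_iff] at hw1
    obtain ⟨n, hn⟩ := hw1
    refine ⟨n, ?_⟩
    have h2pi : (2*(Real.pi:ℂ)*Complex.I) ≠ 0 := by
      refine mul_ne_zero (mul_ne_zero two_ne_zero ?_) Complex.I_ne_zero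
      exact_mod_cast Real.pi_ne_zero
    have : (ν:ℂ) * (2*(Real.pi:ℂ)*Complex.I) = (n:ℂ) * (2*(Real.pi:ℂ)*Complex.I) := by
      rw [hcdef] at hn; linear_combination hn
    have := mul_right_cancel₀ h2pi this
    exact_mod_cast this
  · exact absurd h5 (fun h5 => circle_alg w hw h5)


instance : IsFiniteMeasure (volume.restrict Om) := by
  constructor
  rw [Measure.restrict_apply_univ]
  refine lt_of_le_of_lt (measure_union_le _ _) ?_
  simp [Real.volume_Ioo]

lemma memLp_bdd {f : ℝ → ℂ} (hf : AEStronglyMeasurable f (volume.restrict Om))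
    (C : ℝ) (h : ∀ x, ‖f x‖ ≤ C) : MemLp f 2 (volume.restrict Om) :=
  MemLp.of_bound hf C (Filter.Eventually.of_forall h)

lemma expFn_cont (l : ℝ) : Continuous (expFn l) :=
  Complex.continuous_exp.comp (by fun_prop)

lemma norm_expFn (l : ℝ) (x : ℝ) : ‖expFn l x‖ = 1 := by
  rw [expFn, show (2 * ↑Real.pi * Complex.I * ↑l * ↑x) = ((2*Real.pi*l*x : ℝ):ℂ) * Complex.I by
    push_cast; ring]
  exact Complex.norm_exp_ofReal_mul_I _

lemma memLp_expFn (l : ℝ) : MemLp (expFn l) 2 (volume.restrict Om) :=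
  memLp_bdd (expFn_cont l).aestronglyMeasurable 1 (fun x => (norm_expFn l x).le)

lemma inner_toL2 {f g : ℝ → ℂ} (hf : MemLp f 2 (volume.restrict Om))
    (hg : MemLp g 2 (volume.restrict Om)) :
    (inner ℂ (toL2 Om f) (toL2 Om g) : ℂ) = ∫ x in Om, (starRingEnd ℂ) (f x) * g x := by
  rw [toL2, dif_pos hf, toL2, dif_pos hg, MeasureTheory.L2.inner_def]
  refine integral_congr_ae ?_
  filter_upwards [hf.coeFn_toLp, hg.coeFn_toLp] with x h1 h2
  rw [h1, h2, RCLike.inner_apply, mul_comm]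

noncomputable def sFn : ℝ → ℂ := fun x =>
  (Set.Ioo (2:ℝ) 3).indicator (fun _ => (1:ℂ)) x - (Set.Ioo (3:ℝ) 4).indicator (fun _ => (1:ℂ)) x

lemma sFn_meas : Measurable sFn :=
  (measurable_const.indicator measurableSet_Ioo).sub
    (measurable_const.indicator measurableSet_Ioo)

noncomputable def hFn (t : ℝ) : ℝ → ℂ := fun x => expFn t x * sFn x

lemma memLp_hFn (t : ℝ) : MemLp (hFn t) 2 (volume.restrict Om) := by
  refine memLp_bdd ((expFn_cont t).aestronglyMeasurable.mul
    sFn_meas.aestronglyMeasurable) 1 (fun x => ?_)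
  rw [hFn]
  simp only [norm_mul, norm_expFn, one_mul]
  simp only [sFn, Set.indicator]
  split_ifs <;> norm_num

lemma integrable_exp_mul (c : ℝ) :
    Integrable (fun x : ℝ => Complex.exp ((c : ℂ) * Complex.I * x)) (volume.restrict Om) := by
  refine (memLp_bdd (Continuous.aestronglyMeasurable (by fun_prop)) 1 (fun x => ?_)).integrable
    (by norm_num)
  rw [show ((c:ℂ) * Complex.I * x) = ((c*x : ℝ):ℂ) * Complex.I by push_cast; ring]
  exact (Complex.norm_exp_ofReal_mul_I _).le

lemma ioo23_subset : Set.Ioo (2:ℝ) 3 ⊆ Om := fun x hx =>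
  Or.inr ⟨hx.1, by linarith [hx.2]⟩

lemma ioo34_subset : Set.Ioo (3:ℝ) 4 ⊆ Om := fun x hx =>
  Or.inr ⟨by linarith [hx.1], hx.2⟩

lemma int_indicator_sub (f : ℝ → ℂ) (hf : Integrable f (volume.restrict Om)) :
    ∫ x in Om, ((Set.Ioo (2:ℝ) 3).indicator f x - (Set.Ioo (3:ℝ) 4).indicator f x)
      = (∫ x in Set.Ioo (2:ℝ) 3, f x) - ∫ x in Set.Ioo (3:ℝ) 4, f x := by
  rw [integral_sub (hf.indicator measurableSet_Ioo) (hf.indicator measurableSet_Ioo),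
    integral_indicator measurableSet_Ioo, integral_indicator measurableSet_Ioo,
    Measure.restrict_restrict measurableSet_Ioo, Measure.restrict_restrict measurableSet_Ioo,
    Set.inter_eq_left.mpr ioo23_subset, Set.inter_eq_left.mpr ioo34_subset]

lemma key_orth (t : ℝ) (n : ℤ) :
    (inner ℂ (toL2 Om (expFn (t + n))) (toL2 Om (hFn t)) : ℂ) = 0 := by
  rw [inner_toL2 (memLp_expFn _) (memLp_hFn _)]
  set c : ℂ := ((-2*Real.pi*n : ℝ):ℂ) * Complex.I with hc
  have hpt : ∀ x : ℝ, (starRingEnd ℂ) (expFn (t + n) x) * hFn t x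
      = Complex.exp (c * x) * sFn x := by
    intro x
    rw [hFn, expFn, expFn, ← mul_assoc, ← Complex.exp_conj, ← Complex.exp_add,
      show (starRingEnd ℂ) (2 * ↑Real.pi * Complex.I * ↑(t + (n:ℝ)) * ↑x)
          + 2 * ↑Real.pi * Complex.I * ↑t * ↑x = c * ↑x from by
        simp only [map_mul, Complex.conj_I, Complex.conj_ofReal, map_ofNat, hc]
        push_cast; ring]
  simp only [hpt]
  have hint : Integrable (fun x : ℝ => Complex.exp (c * x)) (volume.restrict Om) :=
    integrable_exp_mul _
  have hpt2 : ∀ x : ℝ, Complex.exp (c * x) * sFn x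
      = (Set.Ioo (2:ℝ) 3).indicator (fun x => Complex.exp (c * x)) x
        - (Set.Ioo (3:ℝ) 4).indicator (fun x => Complex.exp (c * x)) x := by
    intro x
    simp only [sFn, Set.indicator]
    split_ifs <;> ring
  simp only [hpt2]
  rw [int_indicator_sub _ hint]
  have h23 : ∫ x in Set.Ioo (2:ℝ) 3, Complex.exp (c * x)
      = ∫ x in (2:ℝ)..3, Complex.exp (c * x) := by
    rw [intervalIntegral.integral_of_le (by norm_num), ← integral_Ioc_eq_integral_Ioo]
  have h34 : ∫ x in Set.Ioo (3:ℝ) 4, Complex.exp (c * x)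
      = ∫ x in (3:ℝ)..4, Complex.exp (c * x) := by
    rw [intervalIntegral.integral_of_le (by norm_num), ← integral_Ioc_eq_integral_Ioo]
  rw [h23, h34]
  have hshift : ∫ x in (3:ℝ)..4, Complex.exp (c * x)
      = ∫ x in (2:ℝ)..3, Complex.exp (c * ↑(x + 1)) := by
    rw [intervalIntegral.integral_comp_add_right (fun y : ℝ => Complex.exp (c * y)) 1]
    norm_num
  have hec : Complex.exp c = 1 := by
    rw [show c = ((-n : ℤ) : ℂ) * (2 * Real.pi * Complex.I) by rw [hc]; push_cast; ring]
    exact Complex.exp_int_mul_two_pi_mul_I _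
  have : ∀ x : ℝ, Complex.exp (c * ↑(x + 1)) = Complex.exp (c * x) := by
    intro x
    rw [show (c * ↑(x + 1) : ℂ) = c * x + c by push_cast; ring, Complex.exp_add, hec, mul_one]
  rw [hshift]
  simp only [this, sub_self]

lemma hFn_norm (t : ℝ) : (inner ℂ (toL2 Om (hFn t)) (toL2 Om (hFn t)) : ℂ) = 2 := by
  rw [inner_toL2 (memLp_hFn _) (memLp_hFn _)]
  have hpt : ∀ x : ℝ, (starRingEnd ℂ) (hFn t x) * hFn t x
      = (Set.Ioo (2:ℝ) 3).indicator (fun _ => (1:ℂ)) x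
        + (Set.Ioo (3:ℝ) 4).indicator (fun _ => (1:ℂ)) x := by
    intro x
    have h1 : (starRingEnd ℂ) (expFn t x) * expFn t x = 1 := by
      rw [← Complex.normSq_eq_conj_mul_self, Complex.normSq_eq_norm_sq,
        norm_expFn]
      norm_num
    rw [hFn]
    have : (starRingEnd ℂ) (expFn t x * sFn x) * (expFn t x * sFn x)
        = ((starRingEnd ℂ) (expFn t x) * expFn t x) * ((starRingEnd ℂ) (sFn x) * sFn x) := by
      rw [map_mul]; ring
    rw [this, h1, one_mul]
    have h23 : x ∈ Set.Ioo (2:ℝ) 3 → x ∉ Set.Ioo (3:ℝ) 4 := by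
      rintro ⟨_, h⟩ ⟨h', _⟩; linarith
    simp only [sFn, Set.indicator]
    split_ifs with hA hB hB
    · exact absurd hB (h23 hA)
    · norm_num
    · norm_num
    · norm_num
  simp only [hpt]
  have hind : ∀ (a b : ℝ), a < b → Set.Ioo a b ⊆ Om →
      ∫ x in Om, (Set.Ioo a b).indicator (fun _ => (1:ℂ)) x = ((b - a : ℝ) : ℂ) := by
    intro a b hab hsub
    rw [integral_indicator measurableSet_Ioo, Measure.restrict_restrict measurableSet_Ioo,
      Set.inter_eq_left.mpr hsub, setIntegral_const, Real.volume_real_Ioo_of_le hab.le]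
    simp
  rw [integral_add ((integrable_const (1:ℂ)).indicator measurableSet_Ioo)
        ((integrable_const (1:ℂ)).indicator measurableSet_Ioo),
    hind 2 3 (by norm_num) ioo23_subset, hind 3 4 (by norm_num) ioo34_subset]
  norm_num
lemma orth_int (t l : ℝ)
    (h0 : (inner ℂ (toL2 Om (expFn t)) (toL2 Om (expFn l)) : ℂ) = 0) : ∃ n : ℤ, l - t = n := by
  rw [inner_toL2 (memLp_expFn _) (memLp_expFn _)] at h0
  have hpt : ∀ x : ℝ, (starRingEnd ℂ) (expFn t x) * expFn l x
      = Complex.exp ((2*Real.pi*Complex.I*((l - t : ℝ):ℂ)) * x) := by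
    intro x
    rw [expFn, expFn, ← Complex.exp_conj, ← Complex.exp_add]
    congr 1
    simp only [map_mul, Complex.conj_I, Complex.conj_ofReal, map_ofNat]
    push_cast
    ring
  simp only [hpt] at h0
  exact zero_set (l - t) h0


/-- The union `(0,1) ∪ (2,4)` of two open intervals is not a spectral set:
there is no `Λ ⊆ ℝ` such that `{e_λ|_Ω : λ ∈ Λ}` is an orthogonal basis of `L²(Ω)`. -/
theorem union_two_intervals_not_spectral :
    ¬ ∃ Λ : Set ℝ, IsSpectralPair (Set.Ioo 0 1 ∪ Set.Ioo 2 4) Λ := by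
  rintro ⟨Λ, hne, horth, hdense⟩
  obtain ⟨t, ht⟩ : ∃ t : ℝ, ∀ l ∈ Λ, ∃ n : ℤ, l = t + n := by
    rcases Set.eq_empty_or_nonempty Λ with rfl | ⟨t, htΛ⟩
    · exact ⟨0, by simp⟩
    · refine ⟨t, fun l hl => ?_⟩
      by_cases hlt : l = t
      · exact ⟨0, by simp [hlt]⟩
      · obtain ⟨n, hn⟩ := orth_int t l (horth t htΛ l hl (fun h => hlt h.symm))
        exact ⟨n, by linarith⟩
  set H := toL2 Om (hFn t) with hHdef
  have hH2 : (inner ℂ H H : ℂ) = 2 := hFn_norm t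
  have horthH : ∀ u ∈ Submodule.span ℂ ((fun l => toL2 Om (expFn l)) '' Λ),
      (inner ℂ u H : ℂ) = 0 := by
    intro u hu
    induction hu using Submodule.span_induction with
    | mem v hv =>
      obtain ⟨l, hl, rfl⟩ := hv
      obtain ⟨n, rfl⟩ := ht l hl
      exact key_orth t n
    | zero => simp
    | add x y _ _ hx hy => rw [inner_add_left, hx, hy, add_zero]
    | smul c x _ hx => rw [inner_smul_left, hx, mul_zero]
  have hzero : H = 0 := by
    have h2 := Submodule.dense_iff_topologicalClosure_eq_top.mp hdense
    rw [Submodule.topologicalClosure_eq_top_iff] at h2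
    have hmem : H ∈ (Submodule.span ℂ ((fun l => toL2 Om (expFn l)) '' Λ))ᗮ :=
      (Submodule.mem_orthogonal _ H).mpr horthH
    rw [h2] at hmem
    simpa using hmem
  rw [hzero] at hH2
  simp at hH2

end Aux
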